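/- Let β ∈ (0,1], κ > 0, φ_π > 0 and 0 ≤ γ_L < γ_H with γ_H < min(1/β, φ_π). Then the equilibrium response of inflation to a cost-push shock is strictly larger at the higher attention level: 1/((1−βγ_H) + κ(φ_π−γ_H)) > 1/((1−βγ_L) + κ(φ_π−γ_L)) > 0. -/
import Mathlib

/-- With `β ∈ (0,1]`, `κ > 0`, `φ_π > 0` and attention levels `0 ≤ γ_L < γ_H`
with `γ_H < min(1/β, φ_π)`, the equilibrium response of inflation to a
cost-push shock is strictly larger at the higher attention level:
`1/((1−βγ_H) + κ(φ_π−γ_H)) > 1/((1−βγ_L) + κ(φ_π−γ_L)) > 0`. -/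
theorem equilibrium_cost_push_sensitivity_larger_in_high_attention
    (β κ φπ γL γH : ℝ) (hβ0 : 0 < β) (hβ1 : β ≤ 1) (hκ : 0 < κ)
    (hφ : 0 < φπ) (hγL : 0 ≤ γL) (hLH : γL < γH)
    (hγH : γH < min (1 / β) φπ) :
    1 / ((1 - β * γH) + κ * (φπ - γH)) >
      1 / ((1 - β * γL) + κ * (φπ - γL)) ∧
    1 / ((1 - β * γL) + κ * (φπ - γL)) > 0 := by
  have h1 : γH < 1 / β := lt_of_lt_of_le hγH (min_le_left _ _)
  have h2 : γH < φπ := lt_of_lt_of_le hγH (min_le_right _ _)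
  have hbγH : β * γH < 1 := by
    have := (lt_div_iff₀ hβ0).mp h1
    linarith [this]
  have hH : 0 < (1 - β * γH) + κ * (φπ - γH) := by nlinarith
  have hL : 0 < (1 - β * γL) + κ * (φπ - γL) := by nlinarith
  have hlt : (1 - β * γH) + κ * (φπ - γH) < (1 - β * γL) + κ * (φπ - γL) := by
    nlinarith
  exact ⟨one_div_lt_one_div_of_lt hH hlt, by positivity⟩
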